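/- Let F, F' be bounded functions globally defined on ℝ with lim_{t→∞} (F(t) − 2F'(t)t)/√t = 0 and F nonvanishing. Then for every constant c₀ > 0 there exists R > 0 such that c₀ = (F(R²) − 2F'(R²)R²)²/R²; consequently, in (ℝ³, g_F) there exists a Euclidean sphere centered at the origin with extrinsic curvature exactly c₀. -/

import Mathlib

/-! With `k t = F t - 2 F'(t) t`, the curvature of the sphere of radius `√t` is
`w t = k t ^ 2 / t`. Since `k 0 = F 0 ≠ 0`, `w` blows up as `t → 0⁺`, while the decay hypothesis
says `w = (k t / √t) ^ 2 → 0` as `t → ∞`; the intermediate value theorem on `(0, ∞)` then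
gives every positive value. -/

open Filter Set Topology

theorem tendsto_sq_div_nhdsGT_zero_atTop {k : ℝ → ℝ} (hk : ContinuousWithinAt k (Ioi 0) 0)
    (hk0 : k 0 ≠ 0) : Tendsto (fun t => k t ^ 2 / t) (𝓝[>] 0) atTop := by
  simp only [div_eq_mul_inv]
  exact (hk.tendsto.pow 2).pos_mul_atTop (by positivity) tendsto_inv_nhdsGT_zero

theorem tendsto_sq_div_atTop_zero {k : ℝ → ℝ}
    (hk : Tendsto (fun t => k t / √t) atTop (𝓝 0)) :
    Tendsto (fun t => k t ^ 2 / t) atTop (𝓝 0) := by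
  have hsq : (fun t => (k t / √t) ^ 2) =ᶠ[atTop] fun t => k t ^ 2 / t := by
    filter_upwards [eventually_ge_atTop 0] with t ht
    rw [div_pow, Real.sq_sqrt ht]
  simpa using (hk.pow 2).congr' hsq

theorem Ioi_subset_image_sq_div {k : ℝ → ℝ} (hk : ContinuousOn k (Ici 0)) (hk0 : k 0 ≠ 0)
    (hlim : Tendsto (fun t => k t / √t) atTop (𝓝 0)) :
    Ioi 0 ⊆ (fun t => k t ^ 2 / t) '' Ioi 0 := by
  have hw : ContinuousOn (fun t => k t ^ 2 / t) (Ioi 0) :=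
    ((hk.mono Ioi_subset_Ici_self).pow 2).div continuousOn_id fun t ht => ht.ne'
  exact isPreconnected_Ioi.intermediate_value_Ioi (l₁ := atTop) (l₂ := 𝓝[>] 0)
    (le_principal_iff.2 (Ioi_mem_atTop 0)) (le_principal_iff.2 self_mem_nhdsWithin) hw
    (tendsto_sq_div_atTop_zero hlim)
    (tendsto_sq_div_nhdsGT_zero_atTop ((hk 0 self_mem_Ici).mono Ioi_subset_Ici_self) hk0)

theorem stmt6 (F : ℝ → ℝ) (hF : Differentiable ℝ F)
    (hF' : Continuous (deriv F))
    (hne : ∀ t, F t ≠ 0)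
    (hlim : Filter.Tendsto (fun t => (F t - 2 * deriv F t * t) / Real.sqrt t)
      Filter.atTop (nhds 0)) :
    ∀ c0 : ℝ, 0 < c0 → ∃ R : ℝ, 0 < R ∧
      c0 = (F (R ^ 2) - 2 * deriv F (R ^ 2) * R ^ 2) ^ 2 / R ^ 2 := by
  intro c0 hc0
  have hk : Continuous fun t => F t - 2 * deriv F t * t :=
    hF.continuous.sub ((continuous_const.mul hF').mul continuous_id)
  obtain ⟨t, ht, hwt⟩ := Ioi_subset_image_sq_div hk.continuousOn (by simpa using hne 0) hlim hc0
  exact ⟨√t, Real.sqrt_pos.2 ht, by rw [Real.sq_sqrt ht.le]; exact hwt.symm⟩
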